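/- If a finite poset P with p elements is ω-graded of rank r, then 2 e_{p-1}(P,ω) = (p + r - 1) e_p(P,ω), where e_i(P,ω) is the number of surjective (P,ω)-partitions onto {1,...,i}. -/

import Mathlib

/-!
Write `Ω(n)` for the number of `(P, ε)`-partitions with parts at most `n` and `e_i` for the
number of surjective ones onto `{1, …, i}`; let `p = |P|`. Grouping partitions by their set of
values gives `Ω(n) = ∑ e_i C(n, i)`, so `e_i` is the `i`-th Newton coefficient of `Ω` and
`Δ^(p-1) Ω(n) = e_{p-1} + n e_p`.

The grading yields a rank function `ρ` (`0` on minimal elements, `r` on maximal ones,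
`ρ y = ρ x + ε x y` on covers), and `σ ↦ σ + ρ - r` identifies `(P, -ε)`-partitions with parts
at most `a` with `(P, ε)`-partitions with parts at most `a - r`. Comparing `(p-1)`-st differences
gives `e_{p-1}(-ε) - e_{p-1}(ε) = -r e_p`.

On the other hand, merging the values `d` and `d + 1` of a bijective partition (a linear
extension) gives a surjection onto `p - 1` values which is a `(P, ε)`- or a `(P, -ε)`-partition.
Once the merges of incomparable pairs, which are partitions for both labelings, are assigned by
a fixed tie-break, this is a bijection onto the disjoint union, so
`e_{p-1}(ε) + e_{p-1}(-ε) = (p - 1) e_p`. Subtracting the two identities gives the theorem.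
-/

open Polynomial

variable {P : Type*}

/-- The ε-weight of a chain `x₀ ⋖ x₁ ⋖ ⋯ ⋖ xₙ`, recorded as a list:
the sum `Σ ε(x_{i-1}, x_i)` over consecutive pairs. -/
def chainWeight (ε : P → P → ℤ) (c : List P) : ℤ :=
  ((c.zip c.tail).map fun q => ε q.1 q.2).sum

/-- A (nonempty) saturated chain of the poset `P`, as a list of elements with
each member covered by the next. -/
def IsSatChain [PartialOrder P] (c : List P) : Prop :=
  c ≠ [] ∧ c.Chain' (· ⋖ ·)

/-- A maximal chain: a saturated chain starting at a minimal element and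
ending at a maximal element. -/
def IsMaxChainL [PartialOrder P] (c : List P) : Prop :=
  IsSatChain c ∧ (∀ x ∈ c.head?, IsMin x) ∧ (∀ x ∈ c.getLast?, IsMax x)

/-- A saturated chain starting at a minimal element of `P` and ending at `x`. -/
def IsSatChainFromMinTo [PartialOrder P] (x : P) (c : List P) : Prop :=
  IsSatChain c ∧ (∀ y ∈ c.head?, IsMin y) ∧ c.getLast? = some x

/-- `ε` takes only the values `1` and `-1` on covering relations. -/
def IsSignLabeling [PartialOrder P] (ε : P → P → ℤ) : Prop :=
  ∀ x y : P, x ⋖ y → ε x y = 1 ∨ ε x y = -1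

/-- `P` is `ε`-graded of rank `r`: every maximal chain has ε-weight `r`. -/
def IsEGraded [PartialOrder P] (ε : P → P → ℤ) (r : ℤ) : Prop :=
  ∀ c : List P, IsMaxChainL c → chainWeight ε c = r

/-- A `(P,ε)`-partition: an order-reversing map `σ : P → {1,2,…}` which is
strict on covering relations labeled `-1`. -/
def IsPPartition [PartialOrder P] (ε : P → P → ℤ) (σ : P → ℤ) : Prop :=
  (∀ x, 1 ≤ σ x) ∧ (∀ x y : P, x ≤ y → σ y ≤ σ x) ∧
  (∀ x y : P, x ⋖ y → ε x y = -1 → σ y < σ x)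

/-- `Ω(P,ε;n)`: the number of `(P,ε)`-partitions with largest part at most `n`. -/
noncomputable def OmegaCount [PartialOrder P] (ε : P → P → ℤ) (n : ℕ) : ℕ :=
  Nat.card {σ : P → ℤ // IsPPartition ε σ ∧ ∀ x, σ x ≤ (n : ℤ)}

/-- `e_i(P,ε)`: the number of surjective `(P,ε)`-partitions `σ : P ↠ {1,…,i}`. -/
noncomputable def surjCount [PartialOrder P] (ε : P → P → ℤ) (i : ℕ) : ℕ :=
  Nat.card {σ : P → ℤ // IsPPartition ε σ ∧ (∀ x, σ x ≤ (i : ℤ)) ∧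
    ∀ k : ℤ, 1 ≤ k → k ≤ (i : ℤ) → ∃ x, σ x = k}

open Finset Function
open scoped fwdDiff

namespace LabeledPoset

section Rank

lemma chainWeight_cons_cons (ε : P → P → ℤ) (a b : P) (l : List P) :
    chainWeight ε (a :: b :: l) = ε a b + chainWeight ε (b :: l) := by
  simp [chainWeight]

lemma chainWeight_split (ε : P → P → ℤ) (l₁ : List P) (c : P) (l₂ : List P) :
    chainWeight ε (l₁ ++ c :: l₂) = chainWeight ε (l₁ ++ [c]) + chainWeight ε (c :: l₂) := by
  induction l₁ with
  | nil => simp [chainWeight]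
  | cons a l IH =>
    cases l with
    | nil => simp [chainWeight]
    | cons b l =>
      simp only [List.cons_append, chainWeight_cons_cons] at IH ⊢
      rw [IH, add_assoc]

variable [PartialOrder P]

structure IsRank (ε : P → P → ℤ) (r : ℤ) (ρ : P → ℤ) : Prop where
  eq_zero_of_isMin : ∀ x, IsMin x → ρ x = 0
  eq_of_isMax : ∀ x, IsMax x → ρ x = r
  covBy : ∀ x y, x ⋖ y → ρ y = ρ x + ε x y

lemma IsRank.neg {ε : P → P → ℤ} {r : ℤ} {ρ : P → ℤ} (h : IsRank ε r ρ) :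
    IsRank (-ε) (-r) (-ρ) where
  eq_zero_of_isMin x hx := by simp [h.eq_zero_of_isMin x hx]
  eq_of_isMax x hx := by simp [h.eq_of_isMax x hx]
  covBy x y hxy := by simp only [Pi.neg_apply, h.covBy x y hxy]; ring

variable [Finite P]

lemma exists_chain_from_isMin (x : P) :
    ∃ l : List P, (l ++ [x]).IsChain (· ⋖ ·) ∧ ∀ y ∈ (l ++ [x]).head?, IsMin y := by
  induction x using WellFoundedLT.induction with
  | ind x IH =>
    by_cases hx : IsMin x
    · exact ⟨[], by simpa using hx⟩
    · obtain ⟨y, hyx⟩ := exists_covBy_of_wellFoundedGT hx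
      obtain ⟨l, hch, hmin⟩ := IH y hyx.lt
      exact ⟨l ++ [y], hch.append (.singleton x) (by simpa using hyx), by simpa using hmin⟩

lemma exists_chain_to_isMax (x : P) :
    ∃ l : List P, (x :: l).IsChain (· ⋖ ·) ∧ ∀ y ∈ (x :: l).getLast?, IsMax y := by
  induction x using WellFoundedGT.induction with
  | ind x IH =>
    by_cases hx : IsMax x
    · exact ⟨[], by simpa using hx⟩
    · obtain ⟨y, hxy⟩ := exists_covBy_of_wellFoundedLT hx
      obtain ⟨l, hch, hmax⟩ := IH y hxy.lt
      exact ⟨y :: l, List.isChain_cons_cons.2 ⟨hxy, hch⟩, by simpa using hmax⟩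

/-- The ε-weight of a chain from a minimal element to `x` is `r` minus the weight of any chain
from `x` to a maximal element, so it does not depend on the chain. -/
theorem _root_.IsEGraded.exists_isRank {ε : P → P → ℤ} {r : ℤ} (hgr : IsEGraded ε r) :
    ∃ ρ, IsRank ε r ρ := by
  choose up hup using exists_chain_to_isMax (P := P)
  have key : ∀ x l, (l ++ [x]).IsChain (· ⋖ ·) → (∀ y ∈ (l ++ [x]).head?, IsMin y) →
      chainWeight ε (l ++ [x]) = r - chainWeight ε (x :: up x) := by
    intro x l hch hmin
    have hmax : IsMaxChainL (l ++ x :: up x) :=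
      ⟨⟨by simp, List.isChain_split.2 ⟨hch, (hup x).1⟩⟩, by simpa using hmin,
        by simpa using (hup x).2⟩
    have := hgr _ hmax
    rw [chainWeight_split] at this
    linarith
  refine ⟨fun x => r - chainWeight ε (x :: up x), ⟨fun x hx => ?_, fun x hx => ?_, ?_⟩⟩
  · simpa [chainWeight] using (key x [] (by simp) (by simpa using hx)).symm
  · obtain ⟨l, hch, hmin⟩ := exists_chain_from_isMin x
    rw [← key x l hch hmin]
    exact hgr _ ⟨⟨by simp, hch⟩, hmin, by simpa using hx⟩
  · intro x y hxy
    obtain ⟨l, hch, hmin⟩ := exists_chain_from_isMin x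
    have hch' : ((l ++ [x]) ++ [y]).IsChain (· ⋖ ·) :=
      hch.append (.singleton y) (by simpa using hxy)
    rw [← key x l hch hmin, ← key y _ hch' (by simpa using hmin), List.append_assoc,
      List.singleton_append, chainWeight_split]
    simp [chainWeight]

end Rank

section Shift

variable [PartialOrder P] {ε : P → P → ℤ} {r : ℤ} {ρ : P → ℤ}

lemma _root_.IsSignLabeling.neg (h : IsSignLabeling ε) : IsSignLabeling (-ε) := fun x y hxy => by
  rcases h x y hxy with h | h <;> simp [h]

variable [Finite P]

lemma exists_isMax_ge (x : P) : ∃ y, x ≤ y ∧ IsMax y := by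
  simpa using Finite.exists_le_maximal (p := fun _ : P => True) trivial

lemma exists_isMin_le (x : P) : ∃ y, y ≤ x ∧ IsMin y := by
  simpa using Finite.exists_le_minimal (p := fun _ : P => True) trivial

/-- Along a cover the rank moves by `ε`, which exactly trades the strictness required by `-ε`
for that required by `ε`. -/
lemma IsRank.isPPartition_shift (hsign : IsSignLabeling ε) (hρ : IsRank ε r ρ) {σ : P → ℤ}
    (hσ : IsPPartition (-ε) σ) {a : ℤ} (ha : ∀ x, σ x ≤ a) :
    IsPPartition ε (fun x => σ x + ρ x - r) ∧ ∀ x, σ x + ρ x - r ≤ a - r := by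
  classical
  let := Fintype.ofFinite P
  let := Fintype.toLocallyFiniteOrder (α := P)
  obtain ⟨hpos, hanti, hstrict⟩ := hσ
  have hcov : ∀ x y, x ⋖ y → σ y + ρ y - r ≤ σ x + ρ x - r ∧
      (ε x y = -1 → σ y + ρ y - r < σ x + ρ x - r) := by
    intro x y hxy
    have hρxy := hρ.covBy x y hxy
    have hσxy := hanti x y hxy.le
    rcases hsign x y hxy with h | h
    · have := hstrict x y hxy (by simp [h])
      omega
    · omega
  have hanti' : Antitone fun x => σ x + ρ x - r :=
    (antitone_iff_forall_covBy _).2 fun x y hxy => (hcov x y hxy).1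
  refine ⟨⟨fun x => ?_, fun x y hxy => hanti' hxy, fun x y hxy => (hcov x y hxy).2⟩, fun x => ?_⟩
  · show 1 ≤ σ x + ρ x - r
    obtain ⟨y, hxy, hy⟩ := exists_isMax_ge x
    have : σ y + ρ y - r ≤ σ x + ρ x - r := hanti' hxy
    have := hpos y
    have := hρ.eq_of_isMax y hy
    omega
  · obtain ⟨z, hzx, hz⟩ := exists_isMin_le x
    have : σ x + ρ x - r ≤ σ z + ρ z - r := hanti' hzx
    have := ha z
    have := hρ.eq_zero_of_isMin z hz
    omega

theorem omegaCount_neg_eq (hsign : IsSignLabeling ε) (hgr : IsEGraded ε r) {a b : ℕ}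
    (hab : (b : ℤ) = a - r) : OmegaCount (-ε) a = OmegaCount ε b := by
  obtain ⟨ρ, hρ⟩ := hgr.exists_isRank
  have fwd (σ : P → ℤ) (hσ : IsPPartition (-ε) σ ∧ ∀ x, σ x ≤ a) :
      IsPPartition ε (fun x => σ x + ρ x - r) ∧ ∀ x, σ x + ρ x - r ≤ b :=
    (hρ.isPPartition_shift hsign hσ.1 hσ.2).imp_right fun h x => hab ▸ h x
  have bwd (τ : P → ℤ) (hτ : IsPPartition ε τ ∧ ∀ x, τ x ≤ b) :
      IsPPartition (-ε) (fun x => τ x - ρ x + r) ∧ ∀ x, τ x - ρ x + r ≤ a := by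
    have := hρ.neg.isPPartition_shift hsign.neg (by rw [neg_neg]; exact hτ.1) hτ.2
    simp only [Pi.neg_apply, ← sub_eq_add_neg, sub_neg_eq_add] at this
    exact this.imp_right fun h x => by linarith [h x]
  exact Nat.card_congr
    { toFun := fun σ => ⟨_, fwd σ.1 σ.2⟩
      invFun := fun τ => ⟨_, bwd τ.1 τ.2⟩
      left_inv := fun σ => by ext; dsimp only; ring
      right_inv := fun τ => by ext; dsimp only; ring }

end Shift

section Expansion

lemma mem_of_image_eq [Fintype P] {σ : P → ℤ} {S : Finset ℤ} (h : univ.image σ = S) (x : P) :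
    σ x ∈ S :=
  h ▸ mem_image_of_mem σ (mem_univ x)

lemma image_eq_Icc_iff [Fintype P] {σ : P → ℤ} (hpos : ∀ x, 1 ≤ σ x) (k : ℤ) :
    univ.image σ = Icc 1 k ↔ (∀ x, σ x ≤ k) ∧ ∀ m, 1 ≤ m → m ≤ k → ∃ x, σ x = m := by
  constructor
  · intro h
    refine ⟨fun x => (mem_Icc.1 (mem_of_image_eq h x)).2, fun m h1 h2 => ?_⟩
    obtain ⟨x, -, hx⟩ := mem_image.1 (h ▸ mem_Icc.2 ⟨h1, h2⟩)
    exact ⟨x, hx⟩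
  · rintro ⟨hle, hsurj⟩
    ext m
    simp only [mem_image, mem_univ, true_and, mem_Icc]
    exact ⟨by rintro ⟨x, rfl⟩; exact ⟨hpos x, hle x⟩, fun h => hsurj m h.1 h.2⟩

instance finite_image_eq [Fintype P] (S : Finset ℤ) (A : (P → ℤ) → Prop) :
    Finite {σ : P → ℤ // A σ ∧ univ.image σ = S} := by
  refine Finite.of_injective (fun σ x => (⟨σ.1 x, mem_of_image_eq σ.2.2 x⟩ : S)) fun σ τ h => ?_
  ext x
  exact congrArg Subtype.val (congrFun h x)

lemma injective_of_image_eq [Fintype P] {f : P → ℤ} {S : Finset ℤ} (h : univ.image f = S)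
    (hS : #S = Fintype.card P) : Injective f := by
  have := injOn_of_card_image_eq (s := univ) (f := f) (by rw [h, hS, card_univ])
  rwa [coe_univ, Set.injOn_univ] at this

variable [PartialOrder P] [Fintype P] (ε : P → P → ℤ)

lemma surjCount_eq_card (k : ℕ) :
    surjCount ε k = Nat.card {σ : P → ℤ // IsPPartition ε σ ∧ univ.image σ = Icc 1 (k : ℤ)} :=
  Nat.card_congr <| Equiv.subtypeEquivRight fun _ =>
    and_congr_right fun hσ => (image_eq_Icc_iff hσ.1 k).symm

lemma surjCount_eq_zero_of_card_lt {k : ℕ} (hk : Fintype.card P < k) : surjCount ε k = 0 := by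
  rw [surjCount_eq_card, Nat.card_eq_zero]
  refine Or.inl ⟨fun σ => ?_⟩
  have := card_image_le (s := univ) (f := σ.1)
  simp only [σ.2.2, Int.card_Icc, card_univ] at this
  omega

/-- A surjection onto `Fintype.card P` values is injective, so strictness is automatic. -/
lemma surjCount_card_eq {k : ℕ} (hk : Fintype.card P = k) :
    surjCount ε k = Nat.card {f : P → ℤ // Antitone f ∧ univ.image f = Icc 1 (k : ℤ)} := by
  rw [surjCount_eq_card]
  refine Nat.card_congr <| Equiv.subtypeEquivRight fun f =>
    ⟨fun h => ⟨h.1.2.1, h.2⟩, fun h => ⟨⟨fun x => (mem_Icc.1 (mem_of_image_eq h.2 x)).1, h.1,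
      fun x y hxy _ => ?_⟩, h.2⟩⟩
  exact h.1.strictAnti_of_injective (injective_of_image_eq h.2 (by simp [hk])) hxy.lt

noncomputable def extendInt {S T : Finset ℤ} (e : S ≃o T) (t : ℤ) : ℤ :=
  if h : t ∈ S then e ⟨t, h⟩ else t

section ExtendInt

variable {S T : Finset ℤ} (e : S ≃o T)

lemma extendInt_of_mem {t : ℤ} (ht : t ∈ S) : extendInt e t = e ⟨t, ht⟩ := dif_pos ht

lemma extendInt_mem {t : ℤ} (ht : t ∈ S) : extendInt e t ∈ T := by
  rw [extendInt_of_mem e ht]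
  exact Subtype.mem _

lemma extendInt_symm_extendInt {t : ℤ} (ht : t ∈ S) : extendInt e.symm (extendInt e t) = t := by
  rw [extendInt_of_mem e.symm (extendInt_mem e ht)]
  simp [extendInt_of_mem e ht]

lemma strictMonoOn_extendInt : StrictMonoOn (extendInt e) S := fun s hs t ht hst => by
  rw [extendInt_of_mem e hs, extendInt_of_mem e ht, Subtype.coe_lt_coe, e.lt_iff_lt]
  exact hst

lemma image_extendInt : S.image (extendInt e) = T := by
  ext t
  refine ⟨fun h => ?_, fun ht => mem_image.2 ⟨e.symm ⟨t, ht⟩, Subtype.mem _, ?_⟩⟩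
  · obtain ⟨s, hs, rfl⟩ := mem_image.1 h
    exact extendInt_mem e hs
  · rw [extendInt_of_mem e (Subtype.mem _)]
    simp

variable {ε} in
lemma isPPartition_extendInt_comp (hT : ∀ t ∈ T, 1 ≤ t) {σ : P → ℤ}
    (hσ : IsPPartition ε σ ∧ univ.image σ = S) :
    IsPPartition ε (extendInt e ∘ σ) ∧ univ.image (extendInt e ∘ σ) = T := by
  obtain ⟨⟨-, hanti, hstrict⟩, himage⟩ := hσ
  have hmem := mem_of_image_eq himage
  have hmono := strictMonoOn_extendInt e
  refine ⟨⟨fun x => hT _ (extendInt_mem e (hmem x)), fun x y hxy => ?_, fun x y hxy h => ?_⟩, ?_⟩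
  · exact (hmono.le_iff_le (hmem y) (hmem x)).2 (hanti x y hxy)
  · exact (hmono.lt_iff_lt (hmem y) (hmem x)).2 (hstrict x y hxy h)
  · rw [← image_image, himage, image_extendInt]

end ExtendInt

/-- Only the relative order of the values of a `(P, ε)`-partition matters. -/
lemma card_image_eq_congr {S T : Finset ℤ} (hS : ∀ s ∈ S, 1 ≤ s) (hT : ∀ t ∈ T, 1 ≤ t)
    (hST : #S = #T) :
    Nat.card {σ : P → ℤ // IsPPartition ε σ ∧ univ.image σ = S} =
      Nat.card {σ : P → ℤ // IsPPartition ε σ ∧ univ.image σ = T} := by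
  let e : S ≃o T := (S.orderIsoOfFin rfl).symm.trans (T.orderIsoOfFin hST.symm)
  exact Nat.card_congr
    { toFun := fun σ => ⟨_, isPPartition_extendInt_comp e hT σ.2⟩
      invFun := fun τ => ⟨_, isPPartition_extendInt_comp e.symm hS τ.2⟩
      left_inv := fun σ => by ext x; exact extendInt_symm_extendInt e (mem_of_image_eq σ.2.2 x)
      right_inv := fun τ => by
        ext x
        exact extendInt_symm_extendInt e.symm (mem_of_image_eq τ.2.2 x) }

lemma card_image_eq_eq_surjCount {S : Finset ℤ} (hS : ∀ s ∈ S, 1 ≤ s) :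
    Nat.card {σ : P → ℤ // IsPPartition ε σ ∧ univ.image σ = S} = surjCount ε #S := by
  rw [surjCount_eq_card]
  exact card_image_eq_congr ε hS (fun t ht => (mem_Icc.1 ht).1) (by simp)

lemma omegaCount_eq_sum_powerset (n : ℕ) :
    OmegaCount ε n = ∑ S ∈ (Icc 1 (n : ℤ)).powerset,
      Nat.card {σ : P → ℤ // IsPPartition ε σ ∧ univ.image σ = S} := by
  let img (σ : {σ : P → ℤ // IsPPartition ε σ ∧ ∀ x, σ x ≤ n}) : (Icc 1 (n : ℤ)).powerset :=
    ⟨univ.image σ.1, mem_powerset.2 <| image_subset_iff.2 fun x _ =>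
      mem_Icc.2 ⟨σ.2.1.1 x, σ.2.2 x⟩⟩
  have fiber (S : (Icc 1 (n : ℤ)).powerset) :
      {σ // img σ = S} ≃ {σ : P → ℤ // IsPPartition ε σ ∧ univ.image σ = S} :=
    { toFun := fun σ => ⟨σ.1.1, σ.1.2.1, congrArg Subtype.val σ.2⟩
      invFun := fun σ => ⟨⟨σ.1, σ.2.1, fun x => (mem_Icc.1 <| mem_powerset.1 S.2 <|
        mem_of_image_eq σ.2.2 x).2⟩, Subtype.ext σ.2.2⟩
      left_inv := fun _ => rfl
      right_inv := fun _ => rfl }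
  rw [OmegaCount, Nat.card_congr ((Equiv.sigmaFiberEquiv img).symm.trans
    (Equiv.sigmaCongrRight fiber)), Nat.card_sigma]
  exact sum_coe_sort (Icc 1 (n : ℤ)).powerset fun S =>
    Nat.card {σ : P → ℤ // IsPPartition ε σ ∧ univ.image σ = S}

theorem omegaCount_eq_sum_choose (n : ℕ) :
    OmegaCount ε n = ∑ i ∈ range (n + 1), n.choose i * surjCount ε i := by
  rw [omegaCount_eq_sum_powerset, sum_congr rfl fun S hS => card_image_eq_eq_surjCount ε
    fun s hs => (mem_Icc.1 (mem_powerset.1 hS hs)).1, sum_powerset_apply_card]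
  simp

end Expansion

section FwdDiff

variable [PartialOrder P] [Fintype P] (ε : P → P → ℤ)

lemma omegaCount_eq_sum_range_card (n : ℕ) :
    (OmegaCount ε n : ℤ) =
      ∑ i ∈ range (Fintype.card P + 1), (surjCount ε i : ℤ) * n.choose i := by
  have hvan {i : ℕ} (hi : i ∉ range (Fintype.card P + 1)) : surjCount ε i = 0 :=
    surjCount_eq_zero_of_card_lt ε (by rw [mem_range] at hi; omega)
  rw [omegaCount_eq_sum_choose]
  push_cast
  calc ∑ i ∈ range (n + 1), (n.choose i : ℤ) * surjCount ε i
      = ∑ i ∈ range (n + Fintype.card P + 1), (n.choose i : ℤ) * surjCount ε i :=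
        sum_subset (range_subset_range.2 (by omega : n + 1 ≤ _)) fun i _ hi => by
          simp [Nat.choose_eq_zero_of_lt (by simpa using hi : n < i)]
    _ = ∑ i ∈ range (Fintype.card P + 1), (surjCount ε i : ℤ) * n.choose i := by
        rw [← sum_subset (range_subset_range.2 (by omega : Fintype.card P + 1 ≤ _))
          fun i _ hi => by simp [hvan hi]]
        exact sum_congr rfl fun i _ => mul_comm _ _

lemma surjCount_eq_fwdDiff_iter (k : ℕ) :
    (surjCount ε k : ℤ) = (Δ_[1] ^[k] fun n => (OmegaCount ε n : ℤ)) 0 := by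
  have hΩ : (fun n => (OmegaCount ε n : ℤ)) =
      ∑ i ∈ range (Fintype.card P + 1), (surjCount ε i : ℤ) • fun n : ℕ => (n.choose i : ℤ) := by
    ext n
    simp [omegaCount_eq_sum_range_card]
  simp only [hΩ, fwdDiff_iter_finsetSum, fwdDiff_iter_const_smul, Finset.sum_apply, Pi.smul_apply,
    fwdDiff_iter_choose_zero, smul_eq_mul, mul_ite, mul_one, mul_zero, sum_ite_eq]
  split_ifs with hk
  · rfl
  · exact_mod_cast surjCount_eq_zero_of_card_lt ε (by rw [mem_range] at hk; omega)

lemma fwdDiff_iter_omegaCount_apply (k a : ℕ) :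
    (Δ_[1] ^[k] fun n => (OmegaCount ε n : ℤ)) a =
      ∑ j ∈ range (a + 1), a.choose j * (surjCount ε (j + k) : ℤ) := by
  have := shift_eq_sum_fwdDiff_iter 1 (Δ_[1] ^[k] fun n => (OmegaCount ε n : ℤ)) a 0
  simp only [smul_eq_mul, mul_one, zero_add, nsmul_eq_mul, ← Function.iterate_add_apply] at this
  rw [this]
  exact sum_congr rfl fun j _ => by rw [surjCount_eq_fwdDiff_iter]

theorem fwdDiff_iter_omegaCount_apply_of_card_eq {q : ℕ} (hP : Fintype.card P = q + 1) (a : ℕ) :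
    (Δ_[1] ^[q] fun n => (OmegaCount ε n : ℤ)) a = surjCount ε q + a * surjCount ε (q + 1) := by
  rw [fwdDiff_iter_omegaCount_apply, sum_eq_add 0 1 zero_ne_one]
  · simp [add_comm 1 q]
  · intro j _ hj
    rw [surjCount_eq_zero_of_card_lt ε (by omega)]
    simp
  · simp
  · intro h
    simp [show a = 0 by simpa using h]

end FwdDiff

section Merge

def mergeAt (d t : ℤ) : ℤ := if t ≤ d then t else t - 1

lemma monotone_mergeAt (d : ℤ) : Monotone (mergeAt d) := fun s t hst => by
  unfold mergeAt
  split_ifs <;> omega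

lemma mergeAt_eq_mergeAt_iff {d s t : ℤ} (hst : s < t) :
    mergeAt d s = mergeAt d t ↔ s = d ∧ t = d + 1 := by
  unfold mergeAt
  split_ifs <;> omega

lemma image_mergeAt {d q : ℤ} (hd : d ∈ Icc 1 q) : (Icc 1 (q + 1)).image (mergeAt d) = Icc 1 q := by
  rw [mem_Icc] at hd
  ext t
  simp only [mem_image, mem_Icc, mergeAt]
  constructor
  · rintro ⟨s, hs, rfl⟩
    split_ifs <;> omega
  · intro ht
    by_cases htd : t ≤ d
    · exact ⟨t, by omega, if_pos htd⟩
    · exact ⟨t + 1, by omega, by rw [if_neg (by omega)]; ring⟩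

open scoped Classical in
noncomputable def splitAt (σ : P → ℤ) (u x : P) : ℤ := if σ x < σ u ∨ x = u then σ x else σ x + 1

lemma mergeAt_comp_splitAt (σ : P → ℤ) (u : P) : mergeAt (σ u) ∘ splitAt σ u = σ := by
  ext x
  obtain rfl | hx := eq_or_ne x u
  · simp [splitAt, mergeAt]
  · simp only [Function.comp, splitAt, mergeAt, hx, or_false]
    split_ifs <;> omega

lemma splitAt_mergeAt_comp {f : P → ℤ} (hf : Injective f) {u : P} {d : ℤ} (hu : f u = d) :
    splitAt (mergeAt d ∘ f) u = f := by
  ext x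
  obtain rfl | hx := eq_or_ne x u
  · simp [splitAt, mergeAt, hu]
  · have : f x ≠ d := fun h => hx (hf (h.trans hu.symm))
    simp only [splitAt, mergeAt, Function.comp, hu, hx, or_false, le_refl, if_true]
    split_ifs <;> omega

lemma exists_ne_eq_orient [PartialOrder P] {α : Type*} {σ : P → α} {ι : P → ℤ}
    (hι : Injective ι) {a b : P} (hab : a ≠ b) (h : σ a = σ b) :
    ∃ u v, u ≠ v ∧ σ u = σ v ∧ ¬ u ≤ v ∧ (¬ v ≤ u → ι u < ι v) := by
  by_cases hba : b ≤ a
  · exact ⟨a, b, hab, h, fun h' => hab (le_antisymm h' hba), fun h' => absurd hba h'⟩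
  by_cases hab' : a ≤ b
  · exact ⟨b, a, hab.symm, h.symm, hba, fun h' => absurd hab' h'⟩
  rcases (hι.ne hab).lt_or_gt with hι' | hι'
  · exact ⟨a, b, hab, h, hab', fun _ => hι'⟩
  · exact ⟨b, a, hab.symm, h.symm, hba, fun _ => hι'⟩

variable [Fintype P] {q : ℕ}

lemma eq_or_eq_of_image_eq_Icc (hP : Fintype.card P = q + 1) {σ : P → ℤ}
    (hσ : univ.image σ = Icc 1 (q : ℤ)) {u v : P} (huv : u ≠ v) (h : σ u = σ v) {x y : P}
    (hxy : x ≠ y) (hσxy : σ x = σ y) : x = u ∧ y = v ∨ x = v ∧ y = u := by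
  classical
  have hinj : Set.InjOn σ (univ.erase u : Finset P) := by
    refine injOn_of_card_image_eq ?_
    have : (univ.erase u).image σ = univ.image σ := by
      refine (image_subset_image (erase_subset u univ)).antisymm fun t ht => ?_
      obtain ⟨z, -, rfl⟩ := mem_image.1 ht
      obtain rfl | hz := eq_or_ne z u
      · rw [h]
        exact mem_image_of_mem σ (mem_erase.2 ⟨huv.symm, mem_univ v⟩)
      · exact mem_image_of_mem σ (mem_erase.2 ⟨hz, mem_univ z⟩)
    rw [this, hσ, card_erase_of_mem (mem_univ u), card_univ, hP]
    simp
  have mem {z : P} (hz : z ≠ u) : z ∈ (univ.erase u : Finset P) := mem_erase.2 ⟨hz, mem_univ z⟩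
  obtain rfl | hx := eq_or_ne x u
  · exact Or.inl ⟨rfl, hinj (mem hxy.symm) (mem huv.symm) (hσxy.symm.trans h)⟩
  obtain rfl | hy := eq_or_ne y u
  · exact Or.inr ⟨hinj (mem hx) (mem huv.symm) (hσxy.trans h), rfl⟩
  · exact absurd (hinj (mem hx) (mem hy) hσxy) hxy

variable [PartialOrder P]

lemma splitAt_mem (hP : Fintype.card P = q + 1) {σ : P → ℤ} (hanti : Antitone σ)
    (hσ : univ.image σ = Icc 1 (q : ℤ)) {u v : P} (huv : u ≠ v) (h : σ u = σ v) (hle : ¬ u ≤ v) :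
    Antitone (splitAt σ u) ∧ univ.image (splitAt σ u) = Icc 1 ((q : ℤ) + 1) := by
  have hfu : splitAt σ u u = σ u := by simp [splitAt]
  have hfv : splitAt σ u v = σ u + 1 := by simp [splitAt, huv.symm, h]
  have hinj : Injective (splitAt σ u) := by
    intro x y hxy
    by_contra hne
    have : σ x = σ y := by
      rw [← congrFun (mergeAt_comp_splitAt σ u) x, ← congrFun (mergeAt_comp_splitAt σ u) y]
      exact congrArg (mergeAt (σ u)) hxy
    rcases eq_or_eq_of_image_eq_Icc hP hσ huv h hne this with ⟨rfl, rfl⟩ | ⟨rfl, rfl⟩ <;> omega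
  have hbound (x : P) : splitAt σ u x ∈ Icc 1 ((q : ℤ) + 1) := by
    have := mem_Icc.1 (mem_of_image_eq hσ x)
    rw [mem_Icc]
    unfold splitAt
    split_ifs <;> omega
  have hanti' : Antitone (splitAt σ u) := by
    intro x y hxy
    obtain hlt | heq := (hanti hxy).lt_or_eq
    · unfold splitAt
      split_ifs <;> omega
    · obtain rfl | hne := eq_or_ne x y
      · rfl
      rcases eq_or_eq_of_image_eq_Icc hP hσ huv h hne heq.symm with ⟨rfl, rfl⟩ | ⟨rfl, rfl⟩
      · exact absurd hxy hle
      · omega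
  refine ⟨hanti', eq_of_subset_of_card_le (image_subset_iff.2 fun x _ => hbound x) ?_⟩
  rw [card_image_of_injective _ hinj, card_univ, hP]
  simp

/-- Merging the values `d` and `d + 1` of a linear extension `f` gives a `(P, ε)`-partition when
the two elements form a cover labelled `1`, a `(P, -ε)`-partition when they form a cover
labelled `-1`, and both when they are incomparable; `ι` then decides which one is counted. -/
def MergeFavors (ε : P → P → ℤ) (ι : P → ℤ) (f : P → ℤ) (d : ℤ) : Prop :=
  ∃ u v, f u = d ∧ f v = d + 1 ∧ ((v ⋖ u ∧ ε v u = 1) ∨ (¬ v ≤ u ∧ ι u < ι v))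

variable {ε : P → P → ℤ} {ι : P → ℤ}

lemma isPPartition_mergeAt_comp (hP : Fintype.card P = q + 1) {f : P → ℤ}
    (hf : Antitone f ∧ univ.image f = Icc 1 ((q : ℤ) + 1)) {d : ℤ} (hd : d ∈ Icc 1 (q : ℤ))
    (htag : MergeFavors ε ι f d) :
    IsPPartition ε (mergeAt d ∘ f) ∧ univ.image (mergeAt d ∘ f) = Icc 1 (q : ℤ) := by
  obtain ⟨hanti, himage⟩ := hf
  have hinj := injective_of_image_eq himage (by simp [hP])
  obtain ⟨u, v, hu, hv, hfav⟩ := htag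
  refine ⟨⟨fun x => ?_, fun x y hxy => monotone_mergeAt d (hanti hxy), fun x y hxy hε => ?_⟩, ?_⟩
  · have := mem_Icc.1 (mem_of_image_eq himage x)
    have := mem_Icc.1 hd
    simp only [Function.comp, mergeAt]
    split_ifs <;> omega
  · refine lt_of_le_of_ne (monotone_mergeAt d (hanti hxy.le)) fun heq => ?_
    obtain ⟨hy, hx⟩ := (mergeAt_eq_mergeAt_iff (hanti.strictAnti_of_injective hinj hxy.lt)).1 heq
    obtain rfl := hinj (hy.trans hu.symm)
    obtain rfl := hinj (hx.trans hv.symm)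
    rcases hfav with ⟨-, h⟩ | ⟨h, -⟩
    · omega
    · exact h hxy.le
  · rw [← image_image, himage, image_mergeAt hd]

lemma mergeFavors_neg_iff (hP : Fintype.card P = q + 1) (hsign : IsSignLabeling ε)
    (hι : Injective ι) {f : P → ℤ} (hf : Antitone f ∧ univ.image f = Icc 1 ((q : ℤ) + 1))
    {d : ℤ} (hd : d ∈ Icc 1 (q : ℤ)) :
    MergeFavors (-ε) (-ι) f d ↔ ¬ MergeFavors ε ι f d := by
  obtain ⟨hanti, himage⟩ := hf
  have hinj := injective_of_image_eq himage (by simp [hP])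
  rw [mem_Icc] at hd
  obtain ⟨u, -, hu⟩ := mem_image.1 (himage ▸ mem_Icc.2 ⟨hd.1, by omega⟩ : d ∈ univ.image f)
  obtain ⟨v, -, hv⟩ :=
    mem_image.1 (himage ▸ mem_Icc.2 ⟨by omega, by omega⟩ : d + 1 ∈ univ.image f)
  have key (ε' : P → P → ℤ) (ι' : P → ℤ) :
      MergeFavors ε' ι' f d ↔ (v ⋖ u ∧ ε' v u = 1) ∨ (¬ v ≤ u ∧ ι' u < ι' v) := by
    refine ⟨fun ⟨u', v', hu', hv', h⟩ => ?_, fun h => ⟨u, v, hu, hv, h⟩⟩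
    obtain rfl := hinj (hu'.trans hu.symm)
    obtain rfl := hinj (hv'.trans hv.symm)
    exact h
  have huv : u ≠ v := by
    rintro rfl
    omega
  rw [key, key]
  by_cases hvu : v ≤ u
  · have hcov : v ⋖ u := ⟨hvu.lt_of_ne huv.symm, fun z hvz hzu => by
      have := hanti.strictAnti_of_injective hinj hvz
      have := hanti.strictAnti_of_injective hinj hzu
      omega⟩
    rcases hsign v u hcov with h | h <;> simp [hcov, hvu, h]
  · have hcov : ¬ v ⋖ u := fun h => hvu h.le
    have := hι.ne huv
    simp only [hcov, hvu, false_and, false_or, not_false_eq_true, true_and, Pi.neg_apply,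
      neg_lt_neg_iff]
    omega

lemma exists_mergeFavors (hP : Fintype.card P = q + 1) (hsign : IsSignLabeling ε)
    (hι : Injective ι) {σ : P → ℤ} (hσ : IsPPartition ε σ ∧ univ.image σ = Icc 1 (q : ℤ)) :
    ∃ f, (Antitone f ∧ univ.image f = Icc 1 ((q : ℤ) + 1)) ∧
      ∃ d ∈ Icc 1 (q : ℤ), mergeAt d ∘ f = σ ∧ MergeFavors ε ι f d := by
  obtain ⟨⟨-, hanti, hstrict⟩, himage⟩ := hσ
  obtain ⟨a, -, b, -, hab, h⟩ := exists_ne_map_eq_of_card_lt_of_maps_to (s := univ)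
    (t := Icc 1 (q : ℤ)) (by simp [hP]) fun x _ => mem_of_image_eq himage x
  obtain ⟨u, v, huv, h, hle, hι'⟩ := exists_ne_eq_orient hι hab h
  refine ⟨splitAt σ u, splitAt_mem hP hanti himage huv h hle, σ u, mem_of_image_eq himage u,
    mergeAt_comp_splitAt σ u, u, v, by simp [splitAt], by simp [splitAt, huv.symm, h], ?_⟩
  by_cases hvu : v ≤ u
  · have hcov : v ⋖ u := ⟨hvu.lt_of_ne huv.symm, fun z hvz hzu => by
      have : σ z = σ v := le_antisymm (hanti v z hvz.le) (h ▸ hanti z u hzu.le)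
      rcases eq_or_eq_of_image_eq_Icc hP himage huv h hvz.ne' this with ⟨rfl, -⟩ | ⟨rfl, -⟩
      · exact hzu.false
      · exact hvz.false⟩
    refine Or.inl ⟨hcov, (hsign v u hcov).resolve_right fun hε => ?_⟩
    have := hstrict v u hcov hε
    omega
  · exact Or.inr ⟨hvu, hι' hvu⟩

lemma eq_of_mergeAt_comp_eq (hP : Fintype.card P = q + 1) {f f' : P → ℤ}
    (hf : Antitone f ∧ univ.image f = Icc 1 ((q : ℤ) + 1))
    (hf' : Antitone f' ∧ univ.image f' = Icc 1 ((q : ℤ) + 1)) {d d' : ℤ}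
    (hd : d ∈ Icc 1 (q : ℤ)) (h : mergeAt d ∘ f = mergeAt d' ∘ f')
    (htag : MergeFavors ε ι f d) (htag' : MergeFavors ε ι f' d') : f = f' ∧ d = d' := by
  have hinj := injective_of_image_eq hf.2 (by simp [hP])
  have hinj' := injective_of_image_eq hf'.2 (by simp [hP])
  have hσ := (isPPartition_mergeAt_comp hP hf hd htag).2
  obtain ⟨u, v, hu, hv, hfav⟩ := htag
  obtain ⟨u', v', hu', hv', hfav'⟩ := htag'
  have hσu : (mergeAt d ∘ f) u = d := by simp [mergeAt, hu]
  have hσv : (mergeAt d ∘ f) v = d := by simp [mergeAt, hv]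
  have hσu' : (mergeAt d ∘ f) u' = d' := by rw [h]; simp [mergeAt, hu']
  have hσv' : (mergeAt d ∘ f) v' = d' := by rw [h]; simp [mergeAt, hv']
  have huv : u ≠ v := by
    rintro rfl
    omega
  have hu'v' : u' ≠ v' := by
    rintro rfl
    omega
  rcases eq_or_eq_of_image_eq_Icc hP hσ huv (hσu.trans hσv.symm) hu'v' (hσu'.trans hσv'.symm)
    with ⟨h₁, h₂⟩ | ⟨h₁, h₂⟩ <;> subst u' v'
  · have hdd : d = d' := hσu.symm.trans hσu'
    subst hdd
    refine ⟨?_, rfl⟩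
    calc f = splitAt (mergeAt d ∘ f) u := (splitAt_mergeAt_comp hinj hu).symm
      _ = splitAt (mergeAt d ∘ f') u := by rw [h]
      _ = f' := splitAt_mergeAt_comp hinj' hu'
  · exfalso
    have h₁ : ¬ u ≤ v := fun hle => by
      have := hf.1 hle
      omega
    have h₂ : ¬ v ≤ u := fun hle => by
      have := hf'.1 hle
      omega
    rcases hfav with ⟨hc, -⟩ | ⟨-, hι₁⟩
    · exact h₂ hc.le
    rcases hfav' with ⟨hc, -⟩ | ⟨-, hι₂⟩
    · exact h₁ hc.le
    omega

open scoped Classical in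
noncomputable def mergeMap (hP : Fintype.card P = q + 1) (hsign : IsSignLabeling ε)
    (hι : Injective ι) :
    {f : P → ℤ // Antitone f ∧ univ.image f = Icc 1 ((q : ℤ) + 1)} × Icc 1 (q : ℤ) →
      {σ : P → ℤ // IsPPartition ε σ ∧ univ.image σ = Icc 1 (q : ℤ)} ⊕
        {σ : P → ℤ // IsPPartition (-ε) σ ∧ univ.image σ = Icc 1 (q : ℤ)} := fun fd =>
  if h : MergeFavors ε ι fd.1.1 fd.2 then
    .inl ⟨_, isPPartition_mergeAt_comp hP fd.1.2 fd.2.2 h⟩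
  else
    .inr ⟨_, isPPartition_mergeAt_comp hP fd.1.2 fd.2.2
      ((mergeFavors_neg_iff hP hsign hι fd.1.2 fd.2.2).2 h)⟩

lemma injective_mergeMap (hP : Fintype.card P = q + 1) (hsign : IsSignLabeling ε)
    (hι : Injective ι) : Injective (mergeMap hP hsign hι) := by
  rintro ⟨⟨f, hf⟩, ⟨d, hd⟩⟩ ⟨⟨f', hf'⟩, ⟨d', hd'⟩⟩ h
  have key : f = f' ∧ d = d' := by
    by_cases ht : MergeFavors ε ι f d <;> by_cases ht' : MergeFavors ε ι f' d' <;>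
      simp [mergeMap, ht, ht'] at h
    · exact eq_of_mergeAt_comp_eq hP hf hf' hd h ht ht'
    · rw [← mergeFavors_neg_iff hP hsign hι hf hd] at ht
      rw [← mergeFavors_neg_iff hP hsign hι hf' hd'] at ht'
      exact eq_of_mergeAt_comp_eq hP hf hf' hd h ht ht'
  obtain ⟨rfl, rfl⟩ := key
  rfl

lemma surjective_mergeMap (hP : Fintype.card P = q + 1) (hsign : IsSignLabeling ε)
    (hι : Injective ι) : Surjective (mergeMap hP hsign hι) := by
  rintro (⟨σ, hσ⟩ | ⟨σ, hσ⟩)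
  · obtain ⟨f, hf, d, hd, rfl, ht⟩ := exists_mergeFavors hP hsign hι hσ
    exact ⟨(⟨f, hf⟩, ⟨d, hd⟩), by simp [mergeMap, ht]⟩
  · obtain ⟨f, hf, d, hd, rfl, ht⟩ :=
      exists_mergeFavors hP hsign.neg (neg_injective.comp hι : Injective (-ι)) hσ
    have ht' := (mergeFavors_neg_iff hP hsign hι hf hd).1 ht
    exact ⟨(⟨f, hf⟩, ⟨d, hd⟩), by simp [mergeMap, ht']⟩

end Merge

section Identities

variable [PartialOrder P] [Fintype P] {ε : P → P → ℤ} {q : ℕ}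

theorem surjCount_add_surjCount_neg (hsign : IsSignLabeling ε) (hP : Fintype.card P = q + 1) :
    surjCount ε q + surjCount (-ε) q = surjCount ε (q + 1) * q := by
  obtain ⟨ι, hι⟩ : ∃ ι : P → ℤ, Injective ι :=
    ⟨_, Nat.cast_injective.comp (Fin.val_injective.comp (Fintype.equivFin P).injective)⟩
  have := Nat.card_congr (Equiv.ofBijective _
    ⟨injective_mergeMap hP hsign hι, surjective_mergeMap hP hsign hι⟩)
  rw [Nat.card_prod, Nat.card_sum, Nat.card_eq_fintype_card (α := Icc 1 (q : ℤ)),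
    Fintype.card_coe, Int.card_Icc, ← Nat.cast_succ, ← surjCount_card_eq ε hP,
    ← surjCount_eq_card, ← surjCount_eq_card] at this
  simpa using this.symm

theorem surjCount_neg_sub_surjCount (hsign : IsSignLabeling ε) {r : ℤ} (hgr : IsEGraded ε r)
    (hP : Fintype.card P = q + 1) :
    (surjCount (-ε) q : ℤ) - surjCount ε q = -r * surjCount ε (q + 1) := by
  have hshift : (Δ_[1] ^[q] fun n => (OmegaCount (-ε) n : ℤ)) (0 + r.toNat) =
      (Δ_[1] ^[q] fun n => (OmegaCount ε n : ℤ)) (0 + (-r).toNat) := by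
    rw [← fwdDiff_iter_comp_add, ← fwdDiff_iter_comp_add]
    refine congrArg (fun g => (Δ_[1] ^[q] g) 0) (funext fun n => ?_)
    exact_mod_cast omegaCount_neg_eq hsign hgr (by push_cast; omega)
  rw [zero_add, zero_add, fwdDiff_iter_omegaCount_apply_of_card_eq _ hP,
    fwdDiff_iter_omegaCount_apply_of_card_eq _ hP, surjCount_card_eq (-ε) hP,
    ← surjCount_card_eq ε hP] at hshift
  linear_combination hshift - (surjCount ε (q + 1) : ℤ) * Int.toNat_sub_toNat_neg r

end Identities

end LabeledPoset

/-- if `P` with `p` elements is sign-graded of rank `r`, then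
`2 e_{p-1}(P,ω) = (p + r - 1) e_p(P,ω)`. -/
theorem surj_count_identity {P : Type*} [PartialOrder P] [Fintype P] [Nonempty P]
    (ε : P → P → ℤ) (hsign : IsSignLabeling ε)
    (r : ℤ) (hgr : IsEGraded ε r) :
    (2 : ℤ) * surjCount ε (Fintype.card P - 1) =
      ((Fintype.card P : ℤ) + r - 1) * surjCount ε (Fintype.card P) := by
  obtain ⟨q, hP⟩ := Nat.exists_eq_add_one.2 (Fintype.card_pos (α := P))
  have hA : (surjCount ε q + surjCount (-ε) q : ℤ) = surjCount ε (q + 1) * q := by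
    exact_mod_cast LabeledPoset.surjCount_add_surjCount_neg hsign hP
  have hB := LabeledPoset.surjCount_neg_sub_surjCount hsign hgr hP
  rw [hP, Nat.add_sub_cancel]
  push_cast
  linear_combination hA - hB
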